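/- Let H = (H0, H1) be a consistent partial condition over a nonempty finite set T. If there exists P ∈ H0 with P ⊆ ⋃{N ∈ H1 : N ⊆ P} (i.e., P equals the union of the members of H1 contained in P), then no Rabin condition is consistent with H. -/
import Mathlib

/-- A set `X` satisfies a Rabin condition `R` (a set of pairs `(E, F)`) if
`X ∩ E = ∅` and `X ∩ F ≠ ∅` for some pair `(E, F) ∈ R`. -/
def RabinSat {T : Type*} (R : Set (Set T × Set T)) (X : Set T) : Prop :=
  ∃ p ∈ R, X ∩ p.1 = ∅ ∧ (X ∩ p.2).Nonempty

/-- If some `P ∈ H0` is covered by the union of the members of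
`H1` contained in `P`, then no Rabin condition is consistent with the
consistent partial condition `(H0, H1)` over the nonempty finite set `T`. -/
theorem rabinCons_nonexistence {T : Type*} [Fintype T] [Nonempty T]
    (H0 H1 : Set (Set T)) (hcons : H0 ∩ H1 = ∅)
    (P : Set T) (hP : P ∈ H0) (hsub : P ⊆ ⋃₀ {N | N ∈ H1 ∧ N ⊆ P}) :
    ¬∃ R : Set (Set T × Set T),
      (∀ X ∈ H0, RabinSat R X) ∧ ∀ X ∈ H1, ¬RabinSat R X := by
  rintro ⟨R, hpos, hneg⟩
  obtain ⟨p, hpR, hE, x, hxP, hxF⟩ := hpos P hP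
  obtain ⟨N, ⟨hN1, hNP⟩, hxN⟩ := hsub hxP
  exact hneg N hN1 ⟨p, hpR,
    Set.eq_empty_of_subset_empty (hE ▸ Set.inter_subset_inter_left _ hNP),
    ⟨x, hxN, hxF⟩⟩
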